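/- arXiv:2405.08186 — 3 statements merged into one kernel-verified Lean document; each statement's English description precedes it below -/
import Mathlib

section
/- The integral ∫₀¹ r²(1 - 2r²)/√(1 - (1 - 2r²)²) dr is strictly negative. In fact, by integration by parts it equals -(1/4)∫₀¹ √(1 - (1 - 2r²)²) dr < 0. -/
open Real Set intervalIntegral

/-!
For `0 ≤ r` one has `√(1 - (1 - 2r²)²) = 2r√(1 - r²)`, so on `[0, 1]` the integrand equals
`r√(1 - r²) - r / (2√(1 - r²))`. Both terms have elementary antiderivatives,
`-(1 - r²)^{3/2} / 3` and `√(1 - r²) / 2`; the singular one is integrable, being the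
derivative of a monotone function continuous on `[0, 1]`. Hence the integral is
`1/3 - 1/2 = -1/6`, while `∫₀¹ √(1 - (1 - 2r²)²) dr = 2 ∫₀¹ r√(1 - r²) dr = 2/3`.
-/

lemma hasDerivAt_sqrt_one_sub_sq {x : ℝ} (hx : x ^ 2 < 1) :
    HasDerivAt (fun r => √(1 - r ^ 2)) (-x / √(1 - x ^ 2)) x := by
  convert ((hasDerivAt_pow 2 x).const_sub 1).sqrt (by linarith) using 1
  field_simp
  ring

lemma integral_mul_sqrt_one_sub_sq : ∫ r in (0 : ℝ)..1, r * √(1 - r ^ 2) = 1 / 3 := by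
  have hderiv : ∀ x ∈ Ioo (0 : ℝ) 1,
      HasDerivAt (fun r => -(1 / 3) * ((1 - r ^ 2) * √(1 - r ^ 2))) (x * √(1 - x ^ 2)) x := by
    rintro x ⟨hx0, hx1⟩
    have hx : 0 < 1 - x ^ 2 := by nlinarith
    refine ((((hasDerivAt_pow 2 x).const_sub 1).mul
      (hasDerivAt_sqrt_one_sub_sq (by linarith))).const_mul (-(1 / 3))).congr_deriv ?_
    field_simp
    rw [sq_sqrt hx.le]
    ring
  rw [integral_eq_sub_of_hasDerivAt_of_le zero_le_one (by fun_prop) hderiv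
    ((by fun_prop : Continuous fun r : ℝ => r * √(1 - r ^ 2)).intervalIntegrable 0 1)]
  norm_num

lemma hasDerivAt_one_sub_sqrt_one_sub_sq {x : ℝ} (hx : x ^ 2 < 1) :
    HasDerivAt (fun r => 1 - √(1 - r ^ 2)) (x / √(1 - x ^ 2)) x := by
  simpa [neg_div] using (hasDerivAt_sqrt_one_sub_sq hx).const_sub 1

lemma intervalIntegrable_div_sqrt_one_sub_sq :
    IntervalIntegrable (fun r : ℝ => r / √(1 - r ^ 2)) MeasureTheory.volume 0 1 := by
  refine intervalIntegrable_deriv_of_nonneg (g := fun r => 1 - √(1 - r ^ 2)) (by fun_prop)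
    (fun x hx => hasDerivAt_one_sub_sqrt_one_sub_sq ?_) (fun x hx => ?_) <;>
  simp only [zero_le_one, min_eq_left, max_eq_right, mem_Ioo] at hx
  · nlinarith
  · exact div_nonneg hx.1.le (sqrt_nonneg _)

lemma integral_div_sqrt_one_sub_sq : ∫ r in (0 : ℝ)..1, r / √(1 - r ^ 2) = 1 := by
  rw [integral_eq_sub_of_hasDerivAt_of_le zero_le_one (by fun_prop)
    (fun x hx => hasDerivAt_one_sub_sqrt_one_sub_sq (by nlinarith [hx.1, hx.2]))
    intervalIntegrable_div_sqrt_one_sub_sq]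
  norm_num

lemma sqrt_one_sub_one_sub_two_mul_sq {r : ℝ} (hr : 0 ≤ r) :
    √(1 - (1 - 2 * r ^ 2) ^ 2) = 2 * (r * √(1 - r ^ 2)) := by
  rw [show 1 - (1 - 2 * r ^ 2) ^ 2 = (2 * r) ^ 2 * (1 - r ^ 2) by ring,
    sqrt_mul (sq_nonneg _), sqrt_sq (by positivity), mul_assoc]

-- At `r = 0` and for `r ≥ 1` both sides are `0`, by `x / 0 = 0`.
lemma sq_mul_one_sub_two_mul_sq_div_sqrt {r : ℝ} (hr : 0 ≤ r) :
    r ^ 2 * (1 - 2 * r ^ 2) / √(1 - (1 - 2 * r ^ 2) ^ 2)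
      = r * √(1 - r ^ 2) - 1 / 2 * (r / √(1 - r ^ 2)) := by
  rw [sqrt_one_sub_one_sub_two_mul_sq hr]
  rcases hr.eq_or_lt with rfl | hr
  · simp
  rcases (sqrt_nonneg (1 - r ^ 2)).eq_or_lt with hs | hs
  · simp [← hs]
  have hsq : √(1 - r ^ 2) ^ 2 = 1 - r ^ 2 := sq_sqrt (sqrt_pos.1 hs).le
  field_simp
  linear_combination -2 * hsq

/-- The integral `∫₀¹ r²(1-2r²)/√(1-(1-2r²)²) dr` equals
`-(1/4)∫₀¹ √(1-(1-2r²)²) dr` and is strictly negative. -/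
theorem stmt3 :
    (∫ r in (0:ℝ)..1, r ^ 2 * (1 - 2 * r ^ 2) / Real.sqrt (1 - (1 - 2 * r ^ 2) ^ 2))
      = -(1 / 4) * ∫ r in (0:ℝ)..1, Real.sqrt (1 - (1 - 2 * r ^ 2) ^ 2) ∧
    (∫ r in (0:ℝ)..1, r ^ 2 * (1 - 2 * r ^ 2) / Real.sqrt (1 - (1 - 2 * r ^ 2) ^ 2)) < 0 := by
  have hnonneg : ∀ r ∈ uIcc (0 : ℝ) 1, 0 ≤ r := fun r hr => by
    rw [uIcc_of_le zero_le_one] at hr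
    exact hr.1
  have hcont : Continuous fun r : ℝ => r * √(1 - r ^ 2) := by fun_prop
  have hlhs :
      (∫ r in (0:ℝ)..1, r ^ 2 * (1 - 2 * r ^ 2) / √(1 - (1 - 2 * r ^ 2) ^ 2)) = -(1 / 6) := by
    rw [integral_congr fun r hr => sq_mul_one_sub_two_mul_sq_div_sqrt (hnonneg r hr),
      integral_sub (hcont.intervalIntegrable 0 1)
        (intervalIntegrable_div_sqrt_one_sub_sq.const_mul _),
      integral_const_mul, integral_mul_sqrt_one_sub_sq, integral_div_sqrt_one_sub_sq]
    norm_num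
  have hsqrt : (∫ r in (0:ℝ)..1, √(1 - (1 - 2 * r ^ 2) ^ 2)) = 2 / 3 := by
    rw [integral_congr fun r hr => sqrt_one_sub_one_sub_two_mul_sq (hnonneg r hr),
      integral_const_mul, integral_mul_sqrt_one_sub_sq]
    norm_num
  rw [hlhs, hsqrt]
  norm_num
end

section
/- For β > 0, define Θ₂(β) = 4 ∫₀^{√(2/β)} r²(1 - βr²)/√(1 - (1 - βr²)²) dr. Then the substitution r = √(2/β) · s shows Θ₂(β) = 4 (2/β)^{3/2} ∫₀¹ s²(1 - 2s²)/√(1 - (1 - 2s²)²) ds; consequently, since ∫₀¹ s²(1 - 2s²)/√(1 - (1 - 2s²)²) ds ≠ 0, the map β ↦ Θ₂(β) is injective on (0,∞). -/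
open Set

/-- Scaling of the period map `Θ₂` and its injectivity on `(0,∞)`. -/
theorem stmt4
    (Θ₂ : ℝ → ℝ)
    (hΘ : ∀ β > (0:ℝ), Θ₂ β =
      4 * ∫ r in (0:ℝ)..Real.sqrt (2 / β),
        r ^ 2 * (1 - β * r ^ 2) / Real.sqrt (1 - (1 - β * r ^ 2) ^ 2))
    (hI : (∫ s in (0:ℝ)..1,
        s ^ 2 * (1 - 2 * s ^ 2) / Real.sqrt (1 - (1 - 2 * s ^ 2) ^ 2)) ≠ 0) :
    (∀ β > (0:ℝ), Θ₂ β = 4 * (2 / β) ^ ((3:ℝ) / 2) *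
      ∫ s in (0:ℝ)..1, s ^ 2 * (1 - 2 * s ^ 2) / Real.sqrt (1 - (1 - 2 * s ^ 2) ^ 2)) ∧
    InjOn Θ₂ (Ioi 0) := by
  set I : ℝ := ∫ s in (0:ℝ)..1,
      s ^ 2 * (1 - 2 * s ^ 2) / Real.sqrt (1 - (1 - 2 * s ^ 2) ^ 2) with hIdef
  have key : ∀ β > (0:ℝ), Θ₂ β = 4 * (2 / β) ^ ((3:ℝ) / 2) * I := by
    intro β hβ
    have h2β : (0:ℝ) < 2 / β := by positivity
    set c := Real.sqrt (2 / β) with hc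
    have hcpos : 0 < c := Real.sqrt_pos.mpr h2β
    have hc2 : c ^ 2 = 2 / β := Real.sq_sqrt h2β.le
    have hβc2 : β * c ^ 2 = 2 := by
      rw [hc2]; field_simp
    have subst : (∫ r in (0:ℝ)..c,
        r ^ 2 * (1 - β * r ^ 2) / Real.sqrt (1 - (1 - β * r ^ 2) ^ 2))
        = c • ∫ s in (0:ℝ)..1,
          (c * s) ^ 2 * (1 - β * (c * s) ^ 2) / Real.sqrt (1 - (1 - β * (c * s) ^ 2) ^ 2) := by
      rw [intervalIntegral.smul_integral_comp_mul_left
        (fun r => r ^ 2 * (1 - β * r ^ 2) / Real.sqrt (1 - (1 - β * r ^ 2) ^ 2)) c]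
      norm_num
    have integr : (∫ s in (0:ℝ)..1,
        (c * s) ^ 2 * (1 - β * (c * s) ^ 2) / Real.sqrt (1 - (1 - β * (c * s) ^ 2) ^ 2))
        = c ^ 2 * I := by
      rw [hIdef, ← intervalIntegral.integral_const_mul]
      apply intervalIntegral.integral_congr
      intro s _
      have h1 : β * (c * s) ^ 2 = 2 * s ^ 2 := by
        have : β * (c * s) ^ 2 = (β * c ^ 2) * s ^ 2 := by ring
        rw [this, hβc2]
      have h2 : (c * s) ^ 2 = c ^ 2 * s ^ 2 := by ring
      have h3 : β * (c ^ 2 * s ^ 2) = 2 * s ^ 2 := by rw [← h2, h1]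
      simp only [h1, h2, h3]
      rw [mul_assoc, mul_div_assoc]
    have hrpow : (2 / β) ^ ((3:ℝ) / 2) = c ^ 3 := by
      rw [hc, Real.sqrt_eq_rpow, ← Real.rpow_natCast ((2 / β) ^ ((1:ℝ)/2)) 3,
        ← Real.rpow_mul h2β.le]
      norm_num
    rw [hΘ β hβ, subst, integr, hrpow, smul_eq_mul]
    ring
  refine ⟨key, ?_⟩
  intro a ha b hb hab
  have ha' : (0:ℝ) < a := ha
  have hb' : (0:ℝ) < b := hb
  rw [key a ha', key b hb'] at hab
  have h4 : (4:ℝ) ≠ 0 := by norm_num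
  have heq : (2 / a) ^ ((3:ℝ) / 2) = (2 / b) ^ ((3:ℝ) / 2) := by
    have := mul_right_cancel₀ hI hab
    exact mul_left_cancel₀ h4 this
  have h2a : (0:ℝ) ≤ 2 / a := by positivity
  have h2b : (0:ℝ) ≤ 2 / b := by positivity
  have heq2 : (2 / a : ℝ) = 2 / b := by
    have := congrArg (· ^ ((2:ℝ) / 3)) heq
    simpa [← Real.rpow_mul h2a, ← Real.rpow_mul h2b] using this
  have : a = b := by
    field_simp at heq2
    linarith
  exact this
end

section
/- Let η : ℝ → ℝ³ be defined by η̇(t) = (p(t), 0, F(x(t))) where F(x) = a₀ + (a₂/2)x², and (p(t), x(t)) solves ẋ = p, ṗ = -F(x)F'(x) with p(t)² + F(x(t))² = 1. Then ‖η̇(t)‖ = 1 for all t, and the (signed) curvature of the planar curve t ↦ (x-component, z-component) of η, namely κ(t) = ẋ z̈ - ẍ ż computed from (p(t), F(x(t))), equals a₂ x(t); i.e., η̈(t) = a₂ x(t) · (-F(x(t)), 0, p(t)). -/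
theorem hasDerivAt_comp_of_eq_quadratic {F x : ℝ → ℝ} {a₀ a₂ v t : ℝ}
    (hF : ∀ y, F y = a₀ + a₂ / 2 * y ^ 2) (hx : HasDerivAt x v t) :
    HasDerivAt (fun s => F (x s)) (a₂ * x t * v) t := by
  simp only [hF]
  refine (((hx.fun_pow 2).const_mul (a₂ / 2)).const_add a₀).congr_deriv ?_
  push_cast
  ring

theorem stmt12_general (a₀ a₂ : ℝ) (F : ℝ → ℝ) (x p : ℝ → ℝ)
    (hF : ∀ y, F y = a₀ + a₂ / 2 * y ^ 2)
    (hx : ∀ t, HasDerivAt x (p t) t)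
    (hp : ∀ t, HasDerivAt p (-(F (x t)) * (a₂ * x t)) t)
    (henergy : ∀ t, (p t) ^ 2 + (F (x t)) ^ 2 = 1) :
    ∀ t : ℝ,
      Real.sqrt ((p t) ^ 2 + (0:ℝ) ^ 2 + (F (x t)) ^ 2) = 1 ∧
      HasDerivAt (fun s => (p s, (0:ℝ), F (x s)))
        (a₂ * x t * (-(F (x t))), (0:ℝ), a₂ * x t * p t) t := by
  intro t
  refine ⟨by simp [henergy t], ?_⟩
  have hp' : HasDerivAt p (a₂ * x t * (-(F (x t)))) t := (hp t).congr_deriv (by ring)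
  exact hp'.prodMk ((hasDerivAt_const t 0).prodMk (hasDerivAt_comp_of_eq_quadratic hF (hx t)))

/-- Euler–Elastica property of the projected geodesic: with
`F(y) = a₀ + (a₂/2)y²`, `ẋ = p`, `ṗ = -F(x)·a₂x`, energy `p² + F(x)² = 1`, and
`η̇ = (p, 0, F(x))`, the curve `η` is unit speed and
`η̈(t) = a₂x(t)·(-F(x(t)), 0, p(t))`. -/
theorem stmt12 (a₀ a₂ : ℝ) (F : ℝ → ℝ) (x p : ℝ → ℝ) (η : ℝ → ℝ × ℝ × ℝ)
    (hF : ∀ y, F y = a₀ + a₂ / 2 * y ^ 2)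
    (hx : ∀ t, HasDerivAt x (p t) t)
    (hp : ∀ t, HasDerivAt p (-(F (x t)) * (a₂ * x t)) t)
    (henergy : ∀ t, (p t) ^ 2 + (F (x t)) ^ 2 = 1)
    (hη : ∀ t, HasDerivAt η (p t, (0:ℝ), F (x t)) t) :
    ∀ t : ℝ,
      Real.sqrt ((p t) ^ 2 + (0:ℝ) ^ 2 + (F (x t)) ^ 2) = 1 ∧
      HasDerivAt (fun s => (p s, (0:ℝ), F (x s)))
        (a₂ * x t * (-(F (x t))), (0:ℝ), a₂ * x t * p t) t :=
  stmt12_general a₀ a₂ F x p hF hx hp henergy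
end
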